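/- Let A be a primitive axial algebra of Jordan type 1/2 over a field F of characteristic not 2, and let a, b be primitive axes in A with (a, b) ≠ 0 and (a, b) ≠ 1. Then A_0(a) ∩ A_{1/2}(b) = (0). -/

import Mathlib

/-! Common framework: commutative, not-necessarily-associative, not-necessarily-unital
algebras over a field `F` of characteristic not 2; primitive axes of Jordan type 1/2;
Frobenius forms; axial algebras of Jordan type 1/2. -/

namespace AxialPaper

variable (F : Type*) [Field F] {A : Type*} [NonUnitalNonAssocCommRing A]
  [Module F A] [SMulCommClass F A A] [IsScalarTower F A A]

/-- The `lam`-eigenvectors of `ad_e : x ↦ e * x` that lie in a subset `S ⊆ A`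
(taking `S = Set.univ` recovers the eigenspace `A_lam(e)` of the whole algebra). -/
def evecIn (S : Set A) (e : A) (lam : F) : Set A :=
  {x ∈ S | e * x = lam • x}

/-- The eigenspace `A_lam(e) = {x | e * x = lam • x}`, as a submodule. -/
def evecSub (e : A) (lam : F) : Submodule F A where
  carrier := {x | e * x = lam • x}
  add_mem' := by
    intro x y hx hy
    simp only [Set.mem_setOf_eq] at *
    rw [mul_add, hx, hy, smul_add]
  zero_mem' := by simp
  smul_mem' := by
    intro c x hx
    simp only [Set.mem_setOf_eq] at *
    rw [mul_smul_comm, hx, smul_comm]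

/-- `e` is a primitive axis of Jordan type `1/2` of the (sub)algebra with underlying set `S`:
`e` is an idempotent belonging to `S`, the multiplication operator `ad_e` is diagonalizable
on `S` with eigenvalues in `{0, 1/2, 1}`, the `1`-eigenspace of `S` is spanned by `e`,
and the fusion rules hold inside `S`.  Taking `S = Set.univ` gives the notion of a
primitive axis of the whole algebra `A`. -/
structure IsPrimitiveAxisIn (S : Set A) (e : A) : Prop where
  mem : e ∈ S
  idem : e * e = e
  decomp : ∀ x ∈ S, ∃ x0 ∈ evecIn F S e 0, ∃ xh ∈ evecIn F S e (2⁻¹ : F),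
      ∃ x1 ∈ evecIn F S e 1, x = x0 + xh + x1
  prim : ∀ x ∈ evecIn F S e 1, ∃ c : F, x = c • e
  fusion00 : ∀ x ∈ evecIn F S e 0, ∀ y ∈ evecIn F S e 0, x * y ∈ evecIn F S e 0
  fusionhh : ∀ x ∈ evecIn F S e (2⁻¹ : F), ∀ y ∈ evecIn F S e (2⁻¹ : F),
      ∃ z0 ∈ evecIn F S e 0, ∃ z1 ∈ evecIn F S e 1, x * y = z0 + z1
  fusion0h : ∀ x ∈ evecIn F S e 0, ∀ y ∈ evecIn F S e (2⁻¹ : F),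
      x * y ∈ evecIn F S e (2⁻¹ : F)
  fusion1h : ∀ x ∈ evecIn F S e 1, ∀ y ∈ evecIn F S e (2⁻¹ : F),
      x * y ∈ evecIn F S e (2⁻¹ : F)
  fusion01 : ∀ x ∈ evecIn F S e 0, ∀ y ∈ evecIn F S e 1, x * y = 0

/-- A primitive axis (of Jordan type 1/2) of the whole algebra `A`. -/
abbrev IsPrimitiveAxis (e : A) : Prop := IsPrimitiveAxisIn F Set.univ e

/-- A primitive semisimple idempotent whose eigenvalues lie in `{0, 1/2, 1}`
(no fusion rules required). -/
def IsPrimSemisimpleIdem (e : A) : Prop :=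
  e * e = e ∧
  (∀ x : A, ∃ x0 ∈ evecIn F (Set.univ : Set A) e 0,
      ∃ xh ∈ evecIn F (Set.univ : Set A) e (2⁻¹ : F),
      ∃ x1 ∈ evecIn F (Set.univ : Set A) e 1, x = x0 + xh + x1) ∧
  (∀ x ∈ evecIn F (Set.univ : Set A) e 1, ∃ c : F, x = c • e)

variable (A) in
/-- `A` is a (primitive) axial algebra of Jordan type `1/2`: it is generated, as a
nonunital nonassociative algebra, by a set of primitive axes. -/
def IsAxialJordanHalf : Prop :=
  ∃ S : Set A, (∀ a ∈ S, IsPrimitiveAxis F a) ∧ NonUnitalAlgebra.adjoin F S = ⊤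

/-- `Bf` is a Frobenius form: a nonzero symmetric invariant bilinear form with
`(a, a) = 1` for every primitive axis `a`. -/
def IsFrobeniusForm (Bf : A →ₗ[F] A →ₗ[F] F) : Prop :=
  Bf ≠ 0 ∧ (∀ x y : A, Bf x y = Bf y x) ∧ (∀ x y z : A, Bf (x * y) z = Bf x (y * z)) ∧
    (∀ e : A, IsPrimitiveAxis F e → Bf e e = 1)

/-- Quasi-definiteness: `(a, b) = 1` for primitive axes `a, b` implies `a = b`. -/
def QuasiDefinite (Bf : A →ₗ[F] A →ₗ[F] F) : Prop :=
  ∀ a b : A, IsPrimitiveAxis F a → IsPrimitiveAxis F b → Bf a b = 1 → a = b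

variable (A) in
/-- Strong axiality: every primitive semisimple idempotent with eigenvalues in
`{0, 1/2, 1}` is a primitive axis. -/
def StronglyAxial : Prop :=
  ∀ e : A, IsPrimSemisimpleIdem F e → IsPrimitiveAxis F e

/-- The element `x_a(b) = (2ab − (a,b)a − b)/((a,b) − 1)`. -/
def xab (Bf : A →ₗ[F] A →ₗ[F] F) (a b : A) : A :=
  (Bf a b - 1)⁻¹ • ((2 : F) • (a * b) - Bf a b • a - b)

end AxialPaper

/-! Decompose `b` with respect to `a` and `a` with respect to `b`; the Frobenius form fixes the
`1`-components as `(a, b) a` and `(a, b) b`. If `z ∈ A_0(a) ∩ A_{1/2}(b)`, the fusion rules kill the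
`1/2`-components on `z`: for `b_{1/2}` because `a` acts on `b z = z/2` by `0`, for `a_{1/2}` because
`a_{1/2} z ∈ A_0(b) + A_1(b)` also lies in `A_{1/2}(b)`. Computing `(a b) z` through
both decompositions then gives `0 = (a, b) z / 2`. -/

namespace AxialPaper

variable {F : Type*} [Field F] {A : Type*} [NonUnitalNonAssocCommRing A] [Module F A]

theorem inv_two_ne_one : (2⁻¹ : F) ≠ 1 := by
  rw [Ne, inv_eq_one, ← one_add_one_eq_two, add_eq_left]
  exact one_ne_zero

theorem mem_evecIn_univ {e x : A} {lam : F} :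
    x ∈ evecIn F (Set.univ : Set A) e lam ↔ e * x = lam • x :=
  ⟨fun h => h.2, fun h => ⟨trivial, h⟩⟩

theorem apply_eq_zero_of_mul_eq_smul {Bf : A →ₗ[F] A →ₗ[F] F}
    (hinv : ∀ x y z : A, Bf (x * y) z = Bf x (y * z)) {e x : A} {lam : F}
    (he : e * e = e) (hx : e * x = lam • x) (hlam : lam ≠ 1) : Bf e x = 0 := by
  have h : Bf e x = lam * Bf e x := calc
    Bf e x = Bf (e * e) x := by rw [he]
    _ = lam * Bf e x := by rw [hinv, hx, map_smul, smul_eq_mul]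
  have : (1 - lam) * Bf e x = 0 := by linear_combination h
  exact (mul_eq_zero.mp this).resolve_left (sub_ne_zero.mpr (Ne.symm hlam))

theorem IsPrimitiveAxis.exists_eq_add_add_smul {e : A} (he : IsPrimitiveAxis F e)
    {Bf : A →ₗ[F] A →ₗ[F] F} (hinv : ∀ x y z : A, Bf (x * y) z = Bf x (y * z))
    (hee : Bf e e = 1) (x : A) :
    ∃ x0 xh : A, e * x0 = 0 ∧ e * xh = (2⁻¹ : F) • xh ∧ x = x0 + xh + Bf e x • e := by
  obtain ⟨x0, hx0, xh, hxh, x1, hx1, rfl⟩ := he.decomp x (Set.mem_univ x)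
  obtain ⟨c, rfl⟩ := he.prim x1 hx1
  rw [mem_evecIn_univ, zero_smul] at hx0
  rw [mem_evecIn_univ] at hxh
  have hc : Bf e (x0 + xh + c • e) = c := by
    have h0 : Bf e x0 = 0 := apply_eq_zero_of_mul_eq_smul hinv he.idem
      (hx0.trans (zero_smul F x0).symm) zero_ne_one
    have hh : Bf e xh = 0 := apply_eq_zero_of_mul_eq_smul hinv he.idem hxh inv_two_ne_one
    rw [map_add, map_add, map_smul, h0, hh, hee, smul_eq_mul, mul_one, zero_add, zero_add]
  exact ⟨x0, xh, hx0, hxh, by rw [hc]⟩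

theorem eq_zero_of_eigen_add_add_eq_zero [SMulCommClass F A A] (h2 : (2 : F) ≠ 0)
    {e u v w : A} (hu : e * u = 0) (hv : e * v = (2⁻¹ : F) • v) (hw : e * w = w)
    (h : u + v + w = 0) :
    u = 0 ∧ v = 0 ∧ w = 0 := by
  have h1 : (2⁻¹ : F) • v + w = 0 := by
    simpa [mul_add, hu, hv, hw] using congrArg (e * ·) h
  have h2' : (2⁻¹ : F) • (2⁻¹ : F) • v + w = 0 := by
    simpa [mul_add, mul_smul_comm, hv, hw] using congrArg (e * ·) h1
  have hv0 : v = 0 := by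
    have hfix : (1 : F) • v = (2⁻¹ : F) • v := by
      rw [one_smul]
      exact smul_right_injective A (inv_ne_zero h2) (add_right_cancel (h1.trans h2'.symm))
    by_contra hne
    exact inv_two_ne_one (smul_left_injective F hne hfix).symm
  have hw0 : w = 0 := by simpa [hv0] using h1
  exact ⟨by simpa [hv0, hw0] using h, hv0, hw0⟩

theorem mul_eq_of_eq_add_add_smul [SMulCommClass F A A] {e x x0 xh : A} {c : F}
    (he : e * e = e) (hx0 : e * x0 = 0) (hxh : e * xh = (2⁻¹ : F) • xh)
    (hx : x = x0 + xh + c • e) :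
    e * x = (2⁻¹ : F) • xh + c • e := by
  rw [hx, mul_add, mul_add, hx0, hxh, mul_smul_comm, he, zero_add]

theorem IsPrimitiveAxis.half_mul_eq_zero_of_mem_zero [IsScalarTower F A A] {e : A}
    (he : IsPrimitiveAxis F e) (h2 : (2 : F) ≠ 0) {x x0 xh z : A} {c : F} (hx0 : e * x0 = 0)
    (hxh : e * xh = (2⁻¹ : F) • xh) (hx : x = x0 + xh + c • e)
    (hz : e * z = 0) (hxz : e * (x * z) = 0) : xh * z = 0 := by
  have hz0 : z ∈ evecIn F Set.univ e 0 := mem_evecIn_univ.mpr (by rw [hz, zero_smul])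
  have h0 : e * (x0 * z) = 0 := by
    simpa using mem_evecIn_univ.mp (he.fusion00 x0 (mem_evecIn_univ.mpr (by simpa)) z hz0)
  have hh : e * (xh * z) = (2⁻¹ : F) • (xh * z) := by
    simpa [mul_comm z xh] using
      mem_evecIn_univ.mp (he.fusion0h z hz0 xh (mem_evecIn_univ.mpr hxh))
  rw [hx, add_mul, add_mul, smul_mul_assoc, hz, smul_zero, add_zero, mul_add, h0, hh,
    zero_add] at hxz
  exact (smul_eq_zero.mp hxz).resolve_left (inv_ne_zero h2)

theorem IsPrimitiveAxis.half_mul_eq_zero_of_mem_half [SMulCommClass F A A] [IsScalarTower F A A]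
    {e : A} (he : IsPrimitiveAxis F e) (h2 : (2 : F) ≠ 0) {x x0 xh z : A} {c : F}
    (hx0 : e * x0 = 0) (hxh : e * xh = (2⁻¹ : F) • xh) (hx : x = x0 + xh + c • e)
    (hz : e * z = (2⁻¹ : F) • z) (hxz : e * (x * z) = (2⁻¹ : F) • (x * z)) : xh * z = 0 := by
  obtain ⟨z0, hz0, z1, hz1, hxhz⟩ :=
    he.fusionhh xh (mem_evecIn_univ.mpr hxh) z (mem_evecIn_univ.mpr hz)
  rw [mem_evecIn_univ, zero_smul] at hz0
  rw [mem_evecIn_univ, one_smul] at hz1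
  have hx0z : e * (x0 * z) = (2⁻¹ : F) • (x0 * z) := mem_evecIn_univ.mp
    (he.fusion0h x0 (mem_evecIn_univ.mpr (by simpa)) z (mem_evecIn_univ.mpr hz))
  have hv : e * (x0 * z + c • (e * z) - x * z) =
      (2⁻¹ : F) • (x0 * z + c • (e * z) - x * z) := by
    rw [mul_sub, mul_add, mul_smul_comm, hx0z, hz, hxz, mul_smul_comm, hz, smul_sub, smul_add,
      smul_comm c (2⁻¹ : F)]
  have hsum : z0 + (x0 * z + c • (e * z) - x * z) + z1 = 0 := by
    rw [hx, add_mul, add_mul, hxhz, smul_mul_assoc]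
    abel
  obtain ⟨rfl, -, rfl⟩ := eq_zero_of_eigen_add_add_eq_zero h2 hz0 hv hz1 hsum
  rw [hxhz, add_zero]

end AxialPaper

open AxialPaper in
theorem stmt10_general {F : Type*} [Field F] {A : Type*} [NonUnitalNonAssocCommRing A]
    [Module F A] [SMulCommClass F A A] [IsScalarTower F A A]
    (h2 : (2 : F) ≠ 0)
    (Bf : A →ₗ[F] A →ₗ[F] F) (hB : IsFrobeniusForm F Bf)
    (a b : A) (ha : IsPrimitiveAxis F a) (hb : IsPrimitiveAxis F b)
    (h0 : Bf a b ≠ 0) :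
    ∀ z : A, a * z = 0 → b * z = (2⁻¹ : F) • z → z = 0 := by
  intro z haz hbz
  obtain ⟨-, hsymm, hinv, hax⟩ := hB
  obtain ⟨b0, bh, hb0, hbh, hbdec⟩ := ha.exists_eq_add_add_smul hinv (hax a ha) b
  obtain ⟨a0, ah, ha0, hah, hadec⟩ := hb.exists_eq_add_add_smul hinv (hax b hb) a
  have hbhz : bh * z = 0 := ha.half_mul_eq_zero_of_mem_zero h2 hb0 hbh hbdec haz
    (by rw [hbz, mul_smul_comm, haz, smul_zero])
  have hahz : ah * z = 0 := hb.half_mul_eq_zero_of_mem_half h2 ha0 hah hadec hbz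
    (by rw [haz, mul_zero, smul_zero])
  have hab_z : (a * b) * z = 0 := by
    rw [mul_eq_of_eq_add_add_smul ha.idem hb0 hbh hbdec, add_mul, smul_mul_assoc, smul_mul_assoc,
      hbhz, haz, smul_zero, smul_zero, add_zero]
  have hba_z : (b * a) * z = (Bf a b * 2⁻¹) • z := by
    rw [mul_eq_of_eq_add_add_smul hb.idem ha0 hah hadec, add_mul, smul_mul_assoc, smul_mul_assoc,
      hahz, hbz, smul_zero, zero_add, hsymm, mul_smul]
  rw [mul_comm b a, hab_z, eq_comm, smul_eq_zero] at hba_z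
  exact hba_z.resolve_left (mul_ne_zero h0 (inv_ne_zero h2))

open AxialPaper in
/-- Lemma `xa(b)PrimInA0`: if `(a,b) ≠ 0, 1` then
`A_0(a) ∩ A_{1/2}(b) = (0)`. -/
theorem stmt10 {F : Type*} [Field F] {A : Type*} [NonUnitalNonAssocCommRing A]
    [Module F A] [SMulCommClass F A A] [IsScalarTower F A A]
    (h2 : (2 : F) ≠ 0)
    (hA : IsAxialJordanHalf F A)
    (Bf : A →ₗ[F] A →ₗ[F] F) (hB : IsFrobeniusForm F Bf)
    (a b : A) (ha : IsPrimitiveAxis F a) (hb : IsPrimitiveAxis F b)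
    (h0 : Bf a b ≠ 0) (h1 : Bf a b ≠ 1) :
    ∀ z : A, a * z = 0 → b * z = (2⁻¹ : F) • z → z = 0 :=
  stmt10_general h2 Bf hB a b ha hb h0
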